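/- Let n ≥ 2 and let W_1,…,W_n be bounded operators on a complex Hilbert space L satisfying the Cuntz relations W_i^* W_j = δ_{ij} I and W_1 W_1^* + ⋯ + W_n W_n^* = I. Let L⁰ be the closed linear span of {W^α x : x ∈ L^c(W), α a word}. Then L⁰ is a reducing subspace for each W_i (i.e. W_i L⁰ ⊆ L⁰ and W_i^* L⁰ ⊆ L⁰ for all i), and the only vector x in the orthogonal complement (L⁰)^⊥ satisfying (W_i^* W_j^* − W_j^* W_i^*)(W^α)^* x = 0 for all i, j and all words α is x = 0 (i.e. the restriction of the tuple to (L⁰)^⊥ has trivial maximal commuting piece). -/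

import Mathlib

open ContinuousLinearMap

noncomputable def wordProd {n : ℕ} {L : Type*} [NormedAddCommGroup L] [InnerProductSpace ℂ L]
    (R : Fin n → L →L[ℂ] L) (α : List (Fin n)) : L →L[ℂ] L :=
  (α.map R).prod

/-- The maximal commuting piece space of a tuple. -/
noncomputable def commPieceSet {n : ℕ} {L : Type*} [NormedAddCommGroup L]
    [InnerProductSpace ℂ L] [CompleteSpace L] (R : Fin n → L →L[ℂ] L) : Set L :=
  {x : L | ∀ (i j : Fin n) (α : List (Fin n)),
    adjoint (R i) (adjoint (R j) (adjoint (wordProd R α) x)) =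
    adjoint (R j) (adjoint (R i) (adjoint (wordProd R α) x))}

/-!
`L⁰` is the closed span of a set that `W_i` maps into itself and that
`W_i^*` maps into itself or to `0`: on `W^α y` with `α = k :: β` `W_i^* W_k = δ_{ik} I` gives
`W_i^* W^α y = δ_{ik} W^β y`, and for `α = []` one uses that `L^c(W)` is `W_i^*`-invariant.
Continuity passes this to the closed span. Finally `L^c(W) ⊆ L⁰`, so a vector of `L^c(W)`
orthogonal to `L⁰` is orthogonal to itself.
-/

theorem Submodule.mapsTo_topologicalClosure_span {R M : Type*} [Semiring R] [TopologicalSpace M]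
    [AddCommMonoid M] [Module R M] [ContinuousAdd M] [ContinuousConstSMul R M]
    (T : M →L[R] M) {s : Set M} (hT : Set.MapsTo T s (span R s).topologicalClosure) :
    Set.MapsTo T (span R s).topologicalClosure (span R s).topologicalClosure :=
  topologicalClosure_minimal (span R s)
    (t := (span R s).topologicalClosure.comap (T : M →ₗ[R] M))
    (span_le.mpr hT) ((isClosed_topologicalClosure _).preimage T.continuous)

section WordOrbit

variable {n : ℕ} {L : Type*} [NormedAddCommGroup L] [InnerProductSpace ℂ L]

lemma wordProd_cons (R : Fin n → L →L[ℂ] L) (k : Fin n) (α : List (Fin n)) :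
    wordProd R (k :: α) = R k ∘L wordProd R α := rfl

def wordOrbit (R : Fin n → L →L[ℂ] L) (s : Set L) : Set L :=
  {x : L | ∃ (α : List (Fin n)) (y : L), y ∈ s ∧ x = wordProd R α y}

lemma subset_wordOrbit (R : Fin n → L →L[ℂ] L) (s : Set L) : s ⊆ wordOrbit R s :=
  fun y hy => ⟨[], y, hy, rfl⟩

lemma mapsTo_wordOrbit (R : Fin n → L →L[ℂ] L) (s : Set L) (i : Fin n) :
    Set.MapsTo (R i) (wordOrbit R s) (wordOrbit R s) := by
  rintro _ ⟨α, y, hy, rfl⟩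
  exact ⟨i :: α, y, hy, rfl⟩

variable [CompleteSpace L]

lemma mapsTo_adjoint_commPieceSet (R : Fin n → L →L[ℂ] L) (k : Fin n) :
    Set.MapsTo (adjoint (R k)) (commPieceSet R) (commPieceSet R) := by
  intro y hy i j α
  simpa [wordProd_cons, adjoint_comp] using hy i j (k :: α)

lemma mapsTo_adjoint_span_wordOrbit {R : Fin n → L →L[ℂ] L}
    (hisom : ∀ i j : Fin n, adjoint (R i) ∘L R j = if i = j then 1 else 0)
    {s : Set L} (hs : ∀ k, Set.MapsTo (adjoint (R k)) s s) (i : Fin n) :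
    Set.MapsTo (adjoint (R i)) (wordOrbit R s) (Submodule.span ℂ (wordOrbit R s)) := by
  rintro _ ⟨α, y, hy, rfl⟩
  cases α with
  | nil => exact Submodule.subset_span (subset_wordOrbit R s (hs i hy))
  | cons k β =>
    have h : adjoint (R i) (wordProd R (k :: β) y) = (adjoint (R i) ∘L R k) (wordProd R β y) :=
      rfl
    rw [h, hisom i k]
    split_ifs
    · exact Submodule.subset_span ⟨β, y, hy, rfl⟩
    · exact Submodule.zero_mem _

end WordOrbit

theorem stmt11_general {n : ℕ} {L : Type*} [NormedAddCommGroup L]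
    [InnerProductSpace ℂ L] [CompleteSpace L]
    (W : Fin n → L →L[ℂ] L)
    (hisom : ∀ i j : Fin n, adjoint (W i) ∘L W j = if i = j then 1 else 0) :
    ∀ L0 : Submodule ℂ L,
      L0 = (Submodule.span ℂ {x : L | ∃ (α : List (Fin n)) (y : L),
        y ∈ commPieceSet W ∧ x = wordProd W α y}).topologicalClosure →
      ((∀ i : Fin n, ∀ x ∈ L0, W i x ∈ L0 ∧ adjoint (W i) x ∈ L0) ∧
        ∀ x ∈ L0ᗮ, x ∈ commPieceSet W → x = 0) := by
  rintro _ rfl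
  set G := wordOrbit W (commPieceSet W)
  have hG : Submodule.span ℂ G ≤ (Submodule.span ℂ G).topologicalClosure :=
    Submodule.le_topologicalClosure _
  refine ⟨fun i x hx => ⟨?_, ?_⟩, fun x hx hxc => ?_⟩
  · refine Submodule.mapsTo_topologicalClosure_span (W i) (fun y hy => hG ?_) hx
    exact Submodule.subset_span (mapsTo_wordOrbit W _ i hy)
  · refine Submodule.mapsTo_topologicalClosure_span (adjoint (W i)) (fun y hy => hG ?_) hx
    exact mapsTo_adjoint_span_wordOrbit hisom (mapsTo_adjoint_commPieceSet W) i hy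
  · have hxL0 := hG (Submodule.subset_span (subset_wordOrbit W _ hxc))
    exact Submodule.disjoint_def.mp (Submodule.orthogonal_disjoint _) x hxL0 hx

/-- for a Cuntz tuple `W` on `L`, the closed span `L⁰` of
`{W^α x : x ∈ L^c(W)}` reduces each `W_i`, and the restriction of the tuple to
`(L⁰)^⊥` has trivial maximal commuting piece. -/
theorem stmt11 {n : ℕ} (hn : 2 ≤ n) {L : Type*} [NormedAddCommGroup L]
    [InnerProductSpace ℂ L] [CompleteSpace L]
    (W : Fin n → L →L[ℂ] L)
    (hisom : ∀ i j : Fin n, adjoint (W i) ∘L W j = if i = j then 1 else 0)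
    (hcuntz : ∑ i : Fin n, W i ∘L adjoint (W i) = 1) :
    ∀ L0 : Submodule ℂ L,
      L0 = (Submodule.span ℂ {x : L | ∃ (α : List (Fin n)) (y : L),
        y ∈ commPieceSet W ∧ x = wordProd W α y}).topologicalClosure →
      ((∀ i : Fin n, ∀ x ∈ L0, W i x ∈ L0 ∧ adjoint (W i) x ∈ L0) ∧
        ∀ x ∈ L0ᗮ, x ∈ commPieceSet W → x = 0) :=
  stmt11_general W hisom
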